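/- Let K be a symmetric positive-definite m × m real matrix, J a diagonal 0-1 matrix, B a symmetric positive-semidefinite m × m matrix, and l, γ_A, γ_I > 0. Then the matrix J K + γ_A l I + γ_I l B K is invertible. -/

import Mathlib

/-! The matrix factors as `(J + γA l K⁻¹ + γI l B) K`. The left factor is a positive-definite
matrix `γA l K⁻¹` plus the positive-semidefinite matrices `J` and `γI l B`, hence positive
definite and invertible, and `K` is invertible. -/

open Matrix

open scoped ComplexOrder

namespace Matrix

variable {n : Type*} [DecidableEq n]

lemma IsDiag.posSemidef_of_diag_nonneg {R : Type*} [CommRing R] [PartialOrder R] [StarRing R]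
    [StarOrderedRing R] {J : Matrix n n R} (hJ : J.IsDiag) (hJ_nonneg : ∀ i, 0 ≤ J i i) :
    J.PosSemidef := by
  rw [← hJ.diagonal_diag]
  exact posSemidef_diagonal_iff.mpr hJ_nonneg

lemma isUnit_mul_add_smul_one_add_smul_mul [Fintype n] {𝕜 : Type*} [RCLike 𝕜]
    {K J B : Matrix n n 𝕜} (hK : K.PosDef) (hJ : J.PosSemidef) (hB : B.PosSemidef)
    {a b : ℝ} (ha : 0 < a) (hb : 0 ≤ b) :
    IsUnit (J * K + a • (1 : Matrix n n 𝕜) + b • (B * K)) := by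
  have hK_unit : IsUnit K := hK.isUnit
  have factor :
      (J + a • K⁻¹ + b • B) * K = J * K + a • (1 : Matrix n n 𝕜) + b • (B * K) := by
    rw [add_mul, add_mul, smul_mul, smul_mul,
      nonsing_inv_mul K ((isUnit_iff_isUnit_det K).mp hK_unit)]
  have hsum : (J + a • K⁻¹ + b • B).PosDef :=
    (PosDef.posSemidef_add hJ (hK.inv.smul ha)).add_posSemidef (hB.smul hb)
  rw [← factor]
  exact hsum.isUnit.mul hK_unit

end Matrix

theorem stmt_19 (m : ℕ) (K J B : Matrix (Fin m) (Fin m) ℝ)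
    (hK : K.PosDef) (hJdiag : J.IsDiag) (hJ01 : ∀ i, J i i = 0 ∨ J i i = 1)
    (hB : B.PosSemidef) (l γA γI : ℝ) (hl : 0 < l) (hγA : 0 < γA) (hγI : 0 < γI) :
    IsUnit (J * K + (γA * l) • (1 : Matrix (Fin m) (Fin m) ℝ) + (γI * l) • (B * K)) := by
  have hJ : J.PosSemidef := hJdiag.posSemidef_of_diag_nonneg fun i => by
    rcases hJ01 i with h | h <;> simp [h]
  exact isUnit_mul_add_smul_one_add_smul_mul hK hJ hB (by positivity) (by positivity)
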